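/- Let A, B be elements of a Banach algebra with identity I, let α > β > 0 be real, and let s > 0 be real with s^{α−β} > ‖A‖ and ‖(s^{α−β}I − A)^{−1} B‖ < s^{β}. Then s^{α}I − A s^{β} − B is invertible and (s^{α}I − A s^{β} − B)^{−1} = ∑_{m=0}^∞ s^{−(m+1)β} ((s^{α−β}I − A)^{−1} B)^{m} (s^{α−β}I − A)^{−1}, the series converging in norm. -/

import Mathlib

/-! Writing `U = s^{α-β} I - A` and `R = U⁻¹`, which exists because `s^{α-β} > ‖A‖`, the operator
factors as `s^α I - A s^β - B = s^β U (I - s^{-β} R B)`. The hypothesis `‖R B‖ < s^β` makes the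
second factor a Neumann perturbation of `I`, and expanding its inverse as a geometric series in
`s^{-β} R B` gives the stated series. -/

theorem Ring.inverse_smul {𝕜 A : Type*} [Field 𝕜] [Semiring A] [Algebra 𝕜 A] (c : 𝕜) (a : A) :
    Ring.inverse (c • a) = c⁻¹ • Ring.inverse a := by
  rcases eq_or_ne c 0 with rfl | hc
  · simp
  have hunit : IsUnit (algebraMap 𝕜 A c) := (isUnit_iff_ne_zero.2 hc).map _
  have hinv : Ring.inverse (algebraMap 𝕜 A c) = algebraMap 𝕜 A c⁻¹ := by
    rw [← mul_one (Ring.inverse _), Ring.inverse_mul_eq_iff_eq_mul _ _ _ hunit, ← map_mul,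
      mul_inv_cancel₀ hc, map_one]
  rw [Algebra.smul_def, Ring.inverse_mul (Or.inl hunit), hinv, Algebra.smul_def, Algebra.commutes]

theorem norm_pow_mul_le {R : Type*} [SeminormedRing R] (x y : R) (m : ℕ) :
    ‖x ^ m * y‖ ≤ ‖x‖ ^ m * ‖y‖ := by
  induction m with
  | zero => simp
  | succ m ih =>
    calc ‖x ^ (m + 1) * y‖ = ‖x * (x ^ m * y)‖ := by rw [pow_succ', mul_assoc]
      _ ≤ ‖x‖ * (‖x‖ ^ m * ‖y‖) := norm_mul_le_of_le le_rfl ih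
      _ = ‖x‖ ^ (m + 1) * ‖y‖ := by ring

section Perturbation

variable {𝕜 𝔸 : Type*} [NormedField 𝕜] [NormedRing 𝔸] [NormedAlgebra 𝕜 𝔸]

theorem smul_sub_eq_smul_mul_one_sub {U : 𝔸} (hU : IsUnit U) (B : 𝔸) {c : 𝕜} (hc : c ≠ 0) :
    c • U - B = c • U * (1 - c⁻¹ • (Ring.inverse U * B)) := by
  rw [mul_sub, mul_one, smul_mul_smul_comm, mul_inv_cancel₀ hc, one_smul,
    Ring.mul_inverse_cancel_left U B hU]

theorem inv_pow_succ_smul_pow_mul (c : 𝕜) (C R : 𝔸) (m : ℕ) :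
    c⁻¹ ^ (m + 1) • (C ^ m * R) = (c⁻¹ • C) ^ m * (c⁻¹ • R) := by
  rw [smul_pow, smul_mul_smul_comm, ← pow_succ]

theorem norm_inv_smul_lt_one {C : 𝔸} {c : 𝕜} (hc : ‖C‖ < ‖c‖) : ‖c⁻¹ • C‖ < 1 := by
  have hc0 : 0 < ‖c‖ := (norm_nonneg C).trans_lt hc
  rwa [norm_smul, norm_inv, inv_mul_lt_iff₀ hc0, mul_one]

theorem summable_norm_inv_pow_succ_smul_pow_mul {C : 𝔸} {c : 𝕜} (hc : ‖C‖ < ‖c‖) (R : 𝔸) :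
    Summable (fun m : ℕ => ‖c⁻¹ ^ (m + 1) • (C ^ m * R)‖) := by
  have hx := norm_inv_smul_lt_one hc
  simp only [inv_pow_succ_smul_pow_mul]
  exact .of_nonneg_of_le (fun _ => norm_nonneg _) (norm_pow_mul_le _ _)
    ((summable_geometric_of_lt_one (norm_nonneg _) hx).mul_right _)

variable [HasSummableGeomSeries 𝔸]

theorem isUnit_smul_sub_of_norm_inverse_mul_lt {U : 𝔸} (hU : IsUnit U) {B : 𝔸} {c : 𝕜}
    (hc : ‖Ring.inverse U * B‖ < ‖c‖) : IsUnit (c • U - B) := by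
  have hc0 : c ≠ 0 := norm_pos_iff.1 ((norm_nonneg _).trans_lt hc)
  rw [smul_sub_eq_smul_mul_one_sub hU B hc0, Algebra.smul_def]
  exact (((isUnit_iff_ne_zero.2 hc0).map _).mul hU).mul
    (isUnit_one_sub_of_norm_lt_one (norm_inv_smul_lt_one hc))

theorem hasSum_inverse_smul_sub {U : 𝔸} (hU : IsUnit U) {B : 𝔸} {c : 𝕜}
    (hc : ‖Ring.inverse U * B‖ < ‖c‖) :
    HasSum (fun m : ℕ => c⁻¹ ^ (m + 1) • ((Ring.inverse U * B) ^ m * Ring.inverse U))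
      (Ring.inverse (c • U - B)) := by
  have hc0 : c ≠ 0 := norm_pos_iff.1 ((norm_nonneg _).trans_lt hc)
  have hx := norm_inv_smul_lt_one hc
  simp only [inv_pow_succ_smul_pow_mul]
  rw [smul_sub_eq_smul_mul_one_sub hU B hc0,
    Ring.inverse_mul (Or.inr (isUnit_one_sub_of_norm_lt_one hx)), Ring.inverse_smul]
  exact (hasSum_geom_series_inverse _ hx).mul_right _

end Perturbation

theorem resolvent_series_nonpermutable_general {𝔸 : Type*} [NormedRing 𝔸] [NormOneClass 𝔸]
    [NormedAlgebra ℝ 𝔸] [CompleteSpace 𝔸] (A B : 𝔸) (α β : ℝ)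
    (s : ℝ) (hs : 0 < s) (hA : ‖A‖ < s ^ (α - β))
    (hB : ‖Ring.inverse (s ^ (α - β) • (1 : 𝔸) - A) * B‖ < s ^ β) :
    IsUnit (s ^ α • (1 : 𝔸) - s ^ β • A - B) ∧
    Summable (fun m : ℕ =>
      ‖(s ^ (-((m : ℝ) + 1) * β)) •
        ((Ring.inverse (s ^ (α - β) • (1 : 𝔸) - A) * B) ^ m *
          Ring.inverse (s ^ (α - β) • (1 : 𝔸) - A))‖) ∧
    Ring.inverse (s ^ α • (1 : 𝔸) - s ^ β • A - B)
      = ∑' m : ℕ, (s ^ (-((m : ℝ) + 1) * β)) •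
          ((Ring.inverse (s ^ (α - β) • (1 : 𝔸) - A) * B) ^ m *
            Ring.inverse (s ^ (α - β) • (1 : 𝔸) - A)) := by
  set U : 𝔸 := s ^ (α - β) • (1 : 𝔸) - A
  have hU : IsUnit U := by
    have := spectrum.mem_resolventSet_of_norm_lt (a := A) (k := s ^ (α - β))
      (by rwa [Real.norm_of_nonneg (by positivity)])
    rwa [spectrum.mem_resolventSet_iff, Algebra.algebraMap_eq_smul_one] at this
  have hc : ‖Ring.inverse U * B‖ < ‖s ^ β‖ := by
    rwa [Real.norm_of_nonneg (by positivity)]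
  have hfactor : s ^ α • (1 : 𝔸) - s ^ β • A - B = s ^ β • U - B := by
    rw [smul_sub, smul_smul, ← Real.rpow_add hs, add_sub_cancel]
  have hcoeff (m : ℕ) : s ^ (-((m : ℝ) + 1) * β) = (s ^ β)⁻¹ ^ (m + 1) := by
    rw [← Real.rpow_neg hs.le, ← Real.rpow_mul_natCast hs.le]
    push_cast
    ring_nf
  simp only [hfactor, hcoeff]
  exact ⟨isUnit_smul_sub_of_norm_inverse_mul_lt hU hc,
    summable_norm_inv_pow_succ_smul_pow_mul hc _, (hasSum_inverse_smul_sub hU hc).tsum_eq.symm⟩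

/-- Resolvent expansion with nonpermutable operators: if `s^{α−β} > ‖A‖` and
`‖(s^{α−β}I − A)^{−1} B‖ < s^β`, then `s^α I − A s^β − B` is invertible and its inverse is
the norm-convergent series `∑_m s^{−(m+1)β} ((s^{α−β}I − A)^{−1} B)^m (s^{α−β}I − A)^{−1}`. -/
theorem resolvent_series_nonpermutable {𝔸 : Type*} [NormedRing 𝔸] [NormOneClass 𝔸]
    [NormedAlgebra ℝ 𝔸] [CompleteSpace 𝔸] (A B : 𝔸) (α β : ℝ) (hβ : 0 < β) (hαβ : β < α)
    (s : ℝ) (hs : 0 < s) (hA : ‖A‖ < s ^ (α - β))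
    (hB : ‖Ring.inverse (s ^ (α - β) • (1 : 𝔸) - A) * B‖ < s ^ β) :
    IsUnit (s ^ α • (1 : 𝔸) - s ^ β • A - B) ∧
    Summable (fun m : ℕ =>
      ‖(s ^ (-((m : ℝ) + 1) * β)) •
        ((Ring.inverse (s ^ (α - β) • (1 : 𝔸) - A) * B) ^ m *
          Ring.inverse (s ^ (α - β) • (1 : 𝔸) - A))‖) ∧
    Ring.inverse (s ^ α • (1 : 𝔸) - s ^ β • A - B)
      = ∑' m : ℕ, (s ^ (-((m : ℝ) + 1) * β)) •
          ((Ring.inverse (s ^ (α - β) • (1 : 𝔸) - A) * B) ^ m *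
            Ring.inverse (s ^ (α - β) • (1 : 𝔸) - A)) :=
  resolvent_series_nonpermutable_general A B α β s hs hA hB
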